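/- arXiv:1608.08580 — 3 statements merged into one kernel-verified Lean document; each statement's English description precedes it below -/
import Mathlib

section
/- Let p be a prime number, γ a natural number, and (λ_e) a sequence of real numbers such that the sequence (λ_e / p^{eγ}) is bounded. If there exists a positive constant C such that λ_{e+1}/p^{(e+1)γ} ≤ λ_e/p^{eγ} + C/p^e for all e, then the limit λ = lim_{e→∞} λ_e/p^{eγ} exists, and λ − λ_e/p^{eγ} ≤ 2C/p^e for all e. -/
open Filter

/-! Adding `C r^n / (1 - r)`, the sum of all increments allowed from step `n` on, to a sequence
that can grow by at most `C r^n` at step `n` makes it antitone; being bounded below it converges, and since the tail tends to `0` the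
original sequence has the same limit `L`, which lies below every term of the modified sequence. -/

section GeometricIncrements

variable {a : ℕ → ℝ} {C r : ℝ}

theorem antitone_add_geometric_tail (hr : r ≠ 1) (ha : ∀ n, a (n + 1) ≤ a n + C * r ^ n) :
    Antitone fun n => a n + C / (1 - r) * r ^ n := by
  have hr' : 1 - r ≠ 0 := sub_ne_zero.mpr hr.symm
  refine antitone_nat_of_succ_le fun n => ?_
  calc a (n + 1) + C / (1 - r) * r ^ (n + 1)
      ≤ a n + C * r ^ n + C / (1 - r) * r ^ (n + 1) := by gcongr; exact ha n
    _ = a n + C / (1 - r) * r ^ n := by field_simp; ring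

theorem exists_tendsto_sub_le_of_le_add_geometric (hr : |r| < 1)
    (hbdd : BddBelow (Set.range a)) (ha : ∀ n, a (n + 1) ≤ a n + C * r ^ n) :
    ∃ L, Tendsto a atTop (nhds L) ∧ ∀ n, L - a n ≤ C / (1 - r) * r ^ n := by
  set b := fun n => a n + C / (1 - r) * r ^ n
  have htail : Tendsto (fun n => C / (1 - r) * r ^ n) atTop (nhds 0) := by
    simpa using (tendsto_pow_atTop_nhds_zero_of_abs_lt_one hr).const_mul (C / (1 - r))
  have hb_bdd : BddBelow (Set.range b) := by
    obtain ⟨m, hm⟩ := hbdd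
    obtain ⟨m', hm'⟩ := htail.bddBelow_range
    exact ⟨m + m', by rintro _ ⟨n, rfl⟩; exact add_le_add (hm ⟨n, rfl⟩) (hm' ⟨n, rfl⟩)⟩
  have hr₁ : r ≠ 1 := ((le_abs_self r).trans_lt hr).ne
  have hb := tendsto_atTop_ciInf (antitone_add_geometric_tail hr₁ ha) hb_bdd
  refine ⟨⨅ n, b n, ?_, fun n => ?_⟩
  · simpa [b] using hb.sub htail
  · linarith [ciInf_le hb_bdd n]

end GeometricIncrements

/-- Lemma 3.5(1) of Polstra–Tucker: if the normalized sequence `λ_e / p^{eγ}` is bounded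
and satisfies `λ_{e+1}/p^{(e+1)γ} ≤ λ_e/p^{eγ} + C/p^e`, then it converges to a limit `λ`
with `λ − λ_e/p^{eγ} ≤ 2C/p^e` for every `e`. -/
theorem sequence_lemma_one (p : ℕ) (hp : p.Prime) (γ : ℕ) (l : ℕ → ℝ)
    (hbdd : ∃ B : ℝ, ∀ e : ℕ, |l e / (p : ℝ) ^ (e * γ)| ≤ B)
    (C : ℝ) (hC : 0 < C)
    (hdec : ∀ e : ℕ, l (e + 1) / (p : ℝ) ^ ((e + 1) * γ) ≤ l e / (p : ℝ) ^ (e * γ) + C / (p : ℝ) ^ e) :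
    ∃ L : ℝ, Tendsto (fun e : ℕ => l e / (p : ℝ) ^ (e * γ)) atTop (nhds L) ∧
      ∀ e : ℕ, L - l e / (p : ℝ) ^ (e * γ) ≤ 2 * C / (p : ℝ) ^ e := by
  have hp2 : (2 : ℝ) ≤ p := by exact_mod_cast hp.two_le
  have hgeom (c : ℝ) (e : ℕ) : c / (p : ℝ) ^ e = c * (p : ℝ)⁻¹ ^ e := by
    rw [inv_pow, div_eq_mul_inv]
  have hbelow : BddBelow (Set.range fun e => l e / (p : ℝ) ^ (e * γ)) := by
    obtain ⟨B, hB⟩ := hbdd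
    exact ⟨-B, by rintro _ ⟨e, rfl⟩; linarith [neg_abs_le (l e / (p : ℝ) ^ (e * γ)), hB e]⟩
  have hratio : |(p : ℝ)⁻¹| < 1 := by
    rw [abs_inv, Nat.abs_cast]
    exact inv_lt_one_of_one_lt₀ (by linarith)
  obtain ⟨L, hL, hLe⟩ := exists_tendsto_sub_le_of_le_add_geometric hratio hbelow
    fun e => (hdec e).trans_eq (by rw [hgeom C e])
  have hconst : C / (1 - (p : ℝ)⁻¹) ≤ 2 * C := by
    have hinv : (p : ℝ)⁻¹ ≤ 2⁻¹ := inv_anti₀ (by norm_num) hp2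
    rw [div_le_iff₀ (by linarith)]
    nlinarith
  refine ⟨L, hL, fun e => (hLe e).trans ?_⟩
  rw [hgeom (2 * C) e]
  gcongr
end

section
/- Let (R,𝔪) be a Noetherian local ring and M' → M → M'' → 0 a right exact sequence of finitely generated R-modules. Then frk(M'') ≤ frk(M) ≤ frk(M') + μ(M''), where frk(N) denotes the maximal rank of a free direct summand of N and μ denotes the minimal number of generators. -/
/-- The minimal number of generators of a module. -/
noncomputable def mu (R M : Type*) [Ring R] [AddCommGroup M] [Module R M] : ℕ :=
  sInf {n : ℕ | ∃ s : Finset M, s.card = n ∧ Submodule.span R (s : Set M) = ⊤}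

/-- The free rank of a module: the maximal rank of a free direct summand. -/
noncomputable def frk (R M : Type*) [Ring R] [AddCommGroup M] [Module R M] : ℕ :=
  sSup {n : ℕ | ∃ N N' : Submodule R M, IsCompl N N' ∧ Nonempty (N ≃ₗ[R] (Fin n → R))}

/-!
A free direct summand of rank `n` is the same thing as a surjection onto `Rⁿ`, which makes
`frk` monotone along surjections. For the second inequality, lifting `μ(M'')` generators of `M''`
through `g` shows that for a surjection `ℓ : M → Rⁿ` the submodule `ℓ(f(M'))` together with
`μ(M'')` vectors spans `Rⁿ`. Modulo `𝔪`, the image of `M'` therefore spans a subspace of `kⁿ` of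
dimension `d ≥ n - μ(M'')`; choose `y₁, …, y_d ∈ M'` whose images form a basis of it. Over a local
ring a map between finite free modules is split injective as soon as it is injective modulo `𝔪`,
so `Rᵈ → Rⁿ`, `eᵢ ↦ ℓ(f(yᵢ))` has a retraction `r`, and `r ∘ ℓ ∘ f : M' → Rᵈ` is onto.
-/

open Function Submodule Module

section Ring

variable {R M N : Type*} [Ring R] [AddCommGroup M] [Module R M] [AddCommGroup N] [Module R N]

theorem exists_isCompl_linearEquiv_pi_iff_exists_surjective {n : ℕ} :
    (∃ P Q : Submodule R M, IsCompl P Q ∧ Nonempty (P ≃ₗ[R] (Fin n → R))) ↔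
      ∃ ℓ : M →ₗ[R] (Fin n → R), Surjective ℓ := by
  constructor
  · rintro ⟨P, Q, hPQ, ⟨e⟩⟩
    exact ⟨e.toLinearMap ∘ₗ P.projectionOnto Q hPQ,
      e.surjective.comp (projectionOnto_surjective hPQ)⟩
  · rintro ⟨ℓ, hℓ⟩
    obtain ⟨σ, hσ⟩ := Module.projective_lifting_property ℓ LinearMap.id hℓ
    have hσℓ (y : Fin n → R) : ℓ (σ y) = y := LinearMap.congr_fun hσ y
    refine ⟨LinearMap.range σ, LinearMap.ker (σ.rangeRestrict ∘ₗ ℓ),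
      LinearMap.isCompl_of_proj ?_, ⟨(LinearEquiv.ofInjective σ ?_).symm⟩⟩
    · rintro ⟨_, y, rfl⟩
      ext
      simp [hσℓ]
    · exact LeftInverse.injective hσℓ

theorem frk_eq_sSup_setOf_exists_surjective :
    frk R M = sSup {n | ∃ ℓ : M →ₗ[R] (Fin n → R), Surjective ℓ} := by
  simp only [frk, exists_isCompl_linearEquiv_pi_iff_exists_surjective]

theorem zero_mem_setOf_exists_surjective :
    0 ∈ {n | ∃ ℓ : M →ₗ[R] (Fin n → R), Surjective ℓ} :=
  ⟨0, fun _ => ⟨0, Subsingleton.elim _ _⟩⟩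

theorem bddAbove_setOf_exists_surjective [StrongRankCondition R] [Module.Finite R M] :
    BddAbove {n | ∃ ℓ : M →ₗ[R] (Fin n → R), Surjective ℓ} := by
  obtain ⟨c, φ, hφ⟩ := Module.Finite.exists_fin' R M
  refine ⟨c, fun n ⟨ℓ, hℓ⟩ => ?_⟩
  simpa using card_le_of_surjective R (ℓ ∘ₗ φ) (hℓ.comp hφ)

theorem le_frk_of_surjective [StrongRankCondition R] [Module.Finite R M] {ι : Type*} [Finite ι]
    (ℓ : M →ₗ[R] (ι → R)) (hℓ : Surjective ℓ) : Nat.card ι ≤ frk R M := by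
  rw [frk_eq_sSup_setOf_exists_surjective]
  let e := LinearEquiv.funCongrLeft R R (Finite.equivFin ι).symm
  exact le_csSup bddAbove_setOf_exists_surjective ⟨e ∘ₗ ℓ, e.surjective.comp hℓ⟩

theorem frk_le_frk_of_surjective [StrongRankCondition R] [Module.Finite R M] (g : M →ₗ[R] N)
    (hg : Surjective g) : frk R N ≤ frk R M := by
  simp only [frk_eq_sSup_setOf_exists_surjective]
  exact csSup_le_csSup bddAbove_setOf_exists_surjective ⟨0, zero_mem_setOf_exists_surjective⟩
    fun n ⟨ℓ, hℓ⟩ => ⟨ℓ ∘ₗ g, hℓ.comp hg⟩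

theorem exists_fin_mu_span_eq_top [Module.Finite R M] :
    ∃ v : Fin (mu R M) → M, span R (Set.range v) = ⊤ := by
  obtain ⟨s, hs⟩ := Module.Finite.fg_top (R := R) (M := M)
  obtain ⟨t, ht, hspan⟩ : mu R M ∈ _ := Nat.sInf_mem ⟨s.card, s, rfl, hs⟩
  refine ht ▸ ⟨(↑) ∘ t.equivFin.symm, ?_⟩
  rwa [Set.range_comp, Equiv.range_eq_univ, Set.image_univ, Subtype.range_coe]

theorem Function.Exact.range_sup_span_eq_top {M'' : Type*} [AddCommGroup M''] [Module R M'']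
    {f : M →ₗ[R] N} {g : N →ₗ[R] M''} (hfg : Exact f g) {s : Set N}
    (hs : span R (g '' s) = ⊤) : LinearMap.range f ⊔ span R s = ⊤ := by
  rw [← hfg.linearMap_ker_eq, sup_comm, ← comap_map_eq, map_span, hs, comap_top]

end Ring

theorem exists_linearIndependent_subset_finrank_le {K V : Type*} [DivisionRing K] [AddCommGroup V]
    [Module K V] [FiniteDimensional K V] (S : Set V) (U : Submodule K V)
    (hSU : span K S ⊔ U = ⊤) :
    ∃ b ⊆ S, LinearIndependent K ((↑) : b → V) ∧ finrank K V ≤ Nat.card b + finrank K U := by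
  obtain ⟨b, hbS, hspan, hli⟩ := exists_linearIndependent K S
  refine ⟨b, hbS, hli, ?_⟩
  have hb : finrank K (span K S) = Nat.card b := by
    rw [← hspan, ← finrank_eq_nat_card_basis (.span hli), Subtype.range_coe]
  calc finrank K V = finrank K (span K S ⊔ U : Submodule K V) := by rw [hSU, finrank_top]
    _ ≤ finrank K (span K S) + finrank K U := Submodule.finrank_add_le_finrank_add_finrank _ _
    _ = Nat.card b + finrank K U := by rw [hb]

namespace IsLocalRing

open TensorProduct

variable {R M N : Type*} [CommRing R] [IsLocalRing R] [AddCommGroup M] [Module R M]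
  [AddCommGroup N] [Module R N]

theorem exists_retraction_of_linearIndependent_one_tmul [Module.Finite R N] [Module.Free R N]
    {ι : Type*} [Fintype ι] (v : ι → N)
    (hv : LinearIndependent (ResidueField R) fun i => (1 : ResidueField R) ⊗ₜ[R] v i) :
    ∃ r : N →ₗ[R] (ι → R), r ∘ₗ Fintype.linearCombination R v = LinearMap.id := by
  classical
  rw [split_injective_iff_lTensor_residueField_injective]
  have hcomp : ⇑((Fintype.linearCombination R v).lTensor (ResidueField R)) =
      Fintype.linearCombination (ResidueField R) (fun i => (1 : ResidueField R) ⊗ₜ[R] v i) ∘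
        piScalarRight R (ResidueField R) (ResidueField R) ι := by
    ext x
    induction x using TensorProduct.induction_on with
    | zero => simp
    | tmul c a => simp [Fintype.linearCombination_apply, tmul_sum, smul_tmul']
    | add x y hx hy => simp only [map_add, comp_apply, hx, hy]
  rw [hcomp]
  exact hv.fintypeLinearCombination_injective.comp (LinearEquiv.injective _)

theorem finrank_le_frk_add_card_of_range_sup_span_eq_top [Module.Finite R M] [Module.Finite R N]
    [Module.Free R N] (h : M →ₗ[R] N) {ι : Type*} [Fintype ι] (u : ι → N)
    (hu : LinearMap.range h ⊔ span R (Set.range u) = ⊤) :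
    finrank R N ≤ frk R M + Fintype.card ι := by
  let k := ResidueField R
  let π := TensorProduct.mk R k N 1
  have hπ : Surjective π := mk_surjective R N k residue_surjective
  have hsup : span k (Set.range (π ∘ h)) ⊔ span k (Set.range (π ∘ u)) = ⊤ := by
    refine eq_top_iff.2 fun z _ => ?_
    obtain ⟨x, rfl⟩ := hπ z
    obtain ⟨_, ⟨y, rfl⟩, w, hw, rfl⟩ := mem_sup.1 (hu ▸ mem_top : x ∈ _)
    rw [map_add]
    refine add_mem_sup (subset_span ⟨y, rfl⟩) (span_le_restrictScalars R k _ ?_)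
    rw [Set.range_comp, ← map_span]
    exact mem_map_of_mem hw
  obtain ⟨b, hbS, hli, hcard⟩ := exists_linearIndependent_subset_finrank_le _ _ hsup
  have : Fintype b := @Fintype.ofFinite _ hli.finite
  choose y hy using fun i : b => hbS i.2
  obtain ⟨r, hr⟩ := exists_retraction_of_linearIndependent_one_tmul (h ∘ y) (by
    rwa [show (fun i => (1 : k) ⊗ₜ[R] (h ∘ y) i) = (↑) from funext hy])
  have hsurj : Surjective (r ∘ₗ h) := fun c =>
    ⟨∑ i, c i • y i, by simpa [Fintype.linearCombination_apply] using LinearMap.congr_fun hr c⟩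
  calc finrank R N = finrank k (k ⊗[R] N) := finrank_baseChange.symm
    _ ≤ Nat.card b + finrank k (span k (Set.range (π ∘ u))) := hcard
    _ ≤ frk R M + Fintype.card ι :=
      add_le_add (le_frk_of_surjective _ hsurj) (finrank_range_le_card _)

end IsLocalRing

theorem frk_right_exact_general {R : Type*} [CommRing R] [IsLocalRing R]
    {M' M M'' : Type*} [AddCommGroup M'] [Module R M'] [AddCommGroup M] [Module R M]
    [AddCommGroup M''] [Module R M''] [Module.Finite R M'] [Module.Finite R M]
    [Module.Finite R M''] (f : M' →ₗ[R] M) (g : M →ₗ[R] M'')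
    (hg : Function.Surjective g) (hexact : Function.Exact f g) :
    frk R M'' ≤ frk R M ∧ frk R M ≤ frk R M' + mu R M'' := by
  refine ⟨frk_le_frk_of_surjective g hg, ?_⟩
  rw [frk_eq_sSup_setOf_exists_surjective]
  refine csSup_le ⟨0, zero_mem_setOf_exists_surjective⟩ fun n ⟨ℓ, hℓ⟩ => ?_
  obtain ⟨v, hv⟩ := exists_fin_mu_span_eq_top (R := R) (M := M'')
  have hlift : span R (g '' Set.range (surjInv hg ∘ v)) = ⊤ := by
    rwa [← Set.range_comp, ← Function.comp_assoc, comp_surjInv, Function.id_comp]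
  have hspan : LinearMap.range (ℓ ∘ₗ f) ⊔ span R (Set.range (ℓ ∘ surjInv hg ∘ v)) = ⊤ := by
    rw [LinearMap.range_comp, Set.range_comp, ← map_span, ← Submodule.map_sup,
      hexact.range_sup_span_eq_top hlift, Submodule.map_top, LinearMap.range_eq_top.2 hℓ]
  simpa using
    IsLocalRing.finrank_le_frk_add_card_of_range_sup_span_eq_top (ℓ ∘ₗ f) _ hspan

/-- For a right exact sequence `M' → M → M'' → 0` of finitely generated modules over a
Noetherian local ring, `frk(M'') ≤ frk(M) ≤ frk(M') + μ(M'')`. -/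
theorem frk_right_exact {R : Type*} [CommRing R] [IsNoetherianRing R] [IsLocalRing R]
    {M' M M'' : Type*} [AddCommGroup M'] [Module R M'] [AddCommGroup M] [Module R M]
    [AddCommGroup M''] [Module R M''] [Module.Finite R M'] [Module.Finite R M]
    [Module.Finite R M''] (f : M' →ₗ[R] M) (g : M →ₗ[R] M'')
    (hg : Function.Surjective g) (hexact : Function.Exact f g) :
    frk R M'' ≤ frk R M ∧ frk R M ≤ frk R M' + mu R M'' :=
  frk_right_exact_general f g hg hexact
end

section
/- Let R be a Noetherian commutative ring of finite Krull dimension d and M a finitely generated R-module. Then for each n ∈ ℕ, one has n·μ(M) − n·d ≤ μ(M^{⊕n}) ≤ n·μ(M), i.e. |μ(M^{⊕n}) − n·μ(M)| ≤ n·d. -/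
/-!
The upper bound holds because `n` copies of a generating set of `M` generate `Mⁿ`.

For the lower bound, Forster's theorem `μ(M) ≤ max_P (μ(M_P) + dim R/P)` together with
`μ(M_P) ≤ μ(M_m) ≤ dim_{R/m} M/mM` for a maximal ideal `m ⊇ P` gives `μ(M) ≤ dim_{R/m} M/mM + d`
for a maximal ideal `m` maximizing the fibre dimension, while
`μ(Mⁿ) ≥ dim_{R/m} Mⁿ/mMⁿ = n · dim_{R/m} M/mM`.

Forster's theorem is proved by induction on the bound `b`. The primes where `b` is attained are
finitely many: each is minimal over an ideal cutting out the locus where `M` needs a given number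
of local generators. By prime avoidance a single `v ∈ M` is basic at all of them, and then `M/Rv`
satisfies the bound `b - 1`.
-/

open Submodule TensorProduct

section Mu

variable {R : Type*} [CommRing R] {M : Type*} [AddCommGroup M] [Module R M]

theorem mu_le_card {s : Finset M} (hs : span R (s : Set M) = ⊤) : mu R M ≤ s.card :=
  Nat.sInf_le ⟨s, rfl, hs⟩

variable (R M) in
theorem exists_finset_card_eq_mu [Module.Finite R M] :
    ∃ s : Finset M, s.card = mu R M ∧ span R (s : Set M) = ⊤ := by
  obtain ⟨s, hs⟩ := Module.Finite.fg_top (R := R) (M := M)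
  exact Nat.sInf_mem (s := {n | ∃ s : Finset M, s.card = n ∧ span R (s : Set M) = ⊤})
    ⟨_, s, rfl, hs⟩

theorem mu_eq_zero_of_subsingleton [Subsingleton M] : mu R M = 0 :=
  Nat.le_zero.mp (mu_le_card (s := ∅) (Subsingleton.elim _ _))

theorem mu_pi_le_sum {ι : Type*} [Fintype ι] (N : ι → Type*)
    [∀ i, AddCommGroup (N i)] [∀ i, Module R (N i)] [∀ i, Module.Finite R (N i)] :
    mu R (∀ i, N i) ≤ ∑ i, mu R (N i) := by
  classical
  choose s hcard hspan using fun i => exists_finset_card_eq_mu R (N i)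
  let t : Finset (∀ i, N i) := Finset.univ.biUnion fun i => (s i).image (Pi.single i)
  have ht : span R (t : Set (∀ i, N i)) = ⊤ := by
    simp only [t, Finset.coe_biUnion, Finset.coe_image, Finset.coe_univ, Set.mem_univ,
      Set.iUnion_true, span_iUnion]
    simp_rw [← LinearMap.coe_single R N, ← map_span, hspan, iSup_map_single, pi_top]
  calc mu R (∀ i, N i) ≤ t.card := mu_le_card ht
    _ ≤ ∑ i, ((s i).image (Pi.single i)).card := Finset.card_biUnion_le
    _ ≤ ∑ i, mu R (N i) := Finset.sum_le_sum fun i _ => (hcard i) ▸ Finset.card_image_le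

theorem mu_le_mu_quotient_add_card [Module.Finite R M] {N : Submodule R M} {t : Finset M}
    (ht : span R (t : Set M) = N) : mu R M ≤ mu R (M ⧸ N) + t.card := by
  classical
  obtain ⟨s, hcard, hspan⟩ := exists_finset_card_eq_mu R (M ⧸ N)
  choose lift hlift using N.mkQ_surjective
  have hs : span R ((s.image lift ∪ t : Finset M) : Set M) = ⊤ := by
    rw [Finset.coe_union, span_union, ht, sup_comm, ← comap_map_mkQ, Finset.coe_image, map_span,
      ← Set.image_comp, show N.mkQ ∘ lift = id from funext hlift, Set.image_id, hspan, comap_top]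
  calc mu R M ≤ (s.image lift ∪ t).card := mu_le_card hs
    _ ≤ s.card + t.card := (Finset.card_union_le _ _).trans (by grw [Finset.card_image_le])
    _ = mu R (M ⧸ N) + t.card := by rw [hcard]

end Mu

section LocalGeneration

variable {R : Type*} [CommRing R] {M : Type*} [AddCommGroup M] [Module R M]

variable (R M) in
/-- `LocallyGeneratedBy R M P t` encodes `μ(M_P) ≤ t` without localizing: some `a ∉ P` multiplies
`M` into the span of at most `t` elements. For finitely generated `M` the two agree. -/
def LocallyGeneratedBy (P : Ideal R) (t : ℕ) : Prop :=
  ∃ (s : Finset M) (a : R), a ∉ P ∧ s.card ≤ t ∧ ∀ x : M, a • x ∈ span R (s : Set M)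

variable (R M) in
noncomputable def localMu (P : Ideal R) : ℕ := sInf {t | LocallyGeneratedBy R M P t}

variable {P Q : Ideal R} {t : ℕ}

theorem LocallyGeneratedBy.mono {t' : ℕ} (h : LocallyGeneratedBy R M P t) (ht : t ≤ t') :
    LocallyGeneratedBy R M P t' :=
  let ⟨s, a, ha, hs, hsa⟩ := h
  ⟨s, a, ha, hs.trans ht, hsa⟩

theorem LocallyGeneratedBy.of_le (h : LocallyGeneratedBy R M Q t) (hPQ : P ≤ Q) :
    LocallyGeneratedBy R M P t :=
  let ⟨s, a, ha, hs, hsa⟩ := h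
  ⟨s, a, fun haP => ha (hPQ haP), hs, hsa⟩

theorem locallyGeneratedBy_mu [Module.Finite R M] (hP : P ≠ ⊤) :
    LocallyGeneratedBy R M P (mu R M) := by
  obtain ⟨s, hcard, hspan⟩ := exists_finset_card_eq_mu R M
  exact ⟨s, 1, (Ideal.ne_top_iff_one P).mp hP, hcard.le, fun x => by simp [hspan]⟩

theorem localMu_le (h : LocallyGeneratedBy R M P t) : localMu R M P ≤ t :=
  Nat.sInf_le h

theorem locallyGeneratedBy_localMu [Module.Finite R M] (hP : P ≠ ⊤) :
    LocallyGeneratedBy R M P (localMu R M P) :=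
  Nat.sInf_mem (s := {t | LocallyGeneratedBy R M P t}) ⟨_, locallyGeneratedBy_mu hP⟩

theorem localMu_le_mu [Module.Finite R M] (hP : P ≠ ⊤) : localMu R M P ≤ mu R M :=
  localMu_le (locallyGeneratedBy_mu hP)

theorem localMu_mono [Module.Finite R M] (hPQ : P ≤ Q) (hQ : Q ≠ ⊤) :
    localMu R M P ≤ localMu R M Q :=
  localMu_le ((locallyGeneratedBy_localMu hQ).of_le hPQ)

theorem localMu_eq_zero_iff [Module.Finite R M] (p : PrimeSpectrum R) :
    localMu R M p.asIdeal = 0 ↔ p ∉ Module.support R M := by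
  constructor
  · intro h hp
    obtain ⟨s, a, ha, hs, hsa⟩ := h ▸ locallyGeneratedBy_localMu (M := M) p.isPrime.ne_top
    obtain ⟨m, hm⟩ := Module.mem_support_iff'.mp hp
    rw [Finset.card_eq_zero.mp (Nat.le_zero.mp hs)] at hsa
    exact hm a ha (by simpa using hsa m)
  · intro hp
    rw [Module.mem_support_iff_of_finite, SetLike.not_le_iff_exists] at hp
    obtain ⟨a, ha, haP⟩ := hp
    refine Nat.le_zero.mp (localMu_le ⟨∅, a, haP, le_rfl, fun x => ?_⟩)
    simp [Module.mem_annihilator.mp ha x]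

theorem locallyGeneratedBy_quotient {N : Submodule R M} {s : Finset M} {a : R} (ha : a ∉ P)
    (hs : ∀ x : M, a • x ∈ span R (s : Set M) ⊔ N) :
    LocallyGeneratedBy R (M ⧸ N) P s.card := by
  classical
  refine ⟨s.image N.mkQ, a, ha, Finset.card_image_le, fun x => ?_⟩
  obtain ⟨y, rfl⟩ := N.mkQ_surjective x
  rw [Finset.coe_image, ← map_span, ← map_smul, ← mem_comap, comap_map_mkQ, sup_comm]
  exact hs y

theorem localMu_quotient_le [Module.Finite R M] (hP : P ≠ ⊤) (N : Submodule R M) :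
    localMu R (M ⧸ N) P ≤ localMu R M P := by
  obtain ⟨s, a, ha, hs, hsa⟩ := locallyGeneratedBy_localMu (M := M) hP
  exact localMu_le ((locallyGeneratedBy_quotient ha fun x => mem_sup_left (hsa x)).mono hs)

theorem smul_mem_span_erase_sup [DecidableEq M] {N : Submodule R M} {s : Finset M} {f : M → R}
    {x₀ : M} (hx₀ : x₀ ∈ s) (hf : ∑ x ∈ s, f x • x ∈ N) {y : M} (hy : y ∈ span R (s : Set M)) :
    f x₀ • y ∈ span R (s.erase x₀ : Set M) ⊔ N := by
  have hspan : span R (s : Set M) ≤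
      (span R (s.erase x₀ : Set M) ⊔ N).comap (LinearMap.lsmul R M (f x₀)) := by
    refine span_le.mpr fun x hx => ?_
    by_cases hxx₀ : x = x₀
    · subst hxx₀
      rw [SetLike.mem_coe, mem_comap, LinearMap.lsmul_apply,
        eq_sub_of_add_eq (Finset.add_sum_erase s (fun x => f x • x) hx₀)]
      exact sub_mem (mem_sup_right hf)
        (mem_sup_left (sum_mem fun z hz => smul_mem _ _ (subset_span hz)))
    · exact smul_mem _ _ (mem_sup_left (subset_span (Finset.mem_erase.mpr ⟨hxx₀, hx⟩)))
  exact hspan hy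

variable (P) in
/-- `v` is basic at `P` when its image in `M_P / P M_P` is nonzero, i.e. `v` can be taken as one
of `μ(M_P)` generators of `M_P`. -/
def IsBasicAt (v : M) : Prop := ∀ a ∉ P, a • v ∉ P • (⊤ : Submodule R M)

theorem LocallyGeneratedBy.quotient_span_singleton (hP : P.IsPrime) {v : M}
    (hv : IsBasicAt P v) (h : LocallyGeneratedBy R M P t) :
    LocallyGeneratedBy R (M ⧸ R ∙ v) P (t - 1) := by
  classical
  obtain ⟨s, a, ha, hs, hsa⟩ := h
  obtain ⟨f, -, hf⟩ := mem_span_finset.mp (hsa v)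
  obtain ⟨x₀, hx₀, hfx₀⟩ : ∃ x₀ ∈ s, f x₀ ∉ P := by
    by_contra! hall
    exact hv a ha (hf ▸ sum_mem fun x hx => smul_mem_smul (hall x hx) mem_top)
  have hrel : ∑ x ∈ s, f x • x ∈ R ∙ v := hf ▸ smul_mem _ a (mem_span_singleton_self v)
  refine (locallyGeneratedBy_quotient (fun h => (hP.mem_or_mem h).elim hfx₀ ha)
    fun x => (mul_smul (f x₀) a x).symm ▸ smul_mem_span_erase_sup hx₀ hrel (hsa x)).mono ?_
  rw [Finset.card_erase_of_mem hx₀]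
  omega

theorem localMu_quotient_span_singleton_le [Module.Finite R M] (hP : P.IsPrime) {v : M}
    (hv : IsBasicAt P v) : localMu R (M ⧸ R ∙ v) P ≤ localMu R M P - 1 :=
  localMu_le ((locallyGeneratedBy_localMu hP.ne_top).quotient_span_singleton hP hv)

theorem IsBasicAt.add_smul_of_mem {v : M} (hv : IsBasicAt P v) {a : R} (ha : a ∈ P) (w : M) :
    IsBasicAt P (v + a • w) := by
  intro b hb hmem
  have haw : b • a • w ∈ P • (⊤ : Submodule R M) := smul_mem _ b (smul_mem_smul ha mem_top)
  exact hv b hb (by simpa [smul_add] using sub_mem hmem haw)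

theorem IsBasicAt.add_smul_of_not_isBasicAt (hP : P.IsPrime) {w : M} (hw : IsBasicAt P w)
    {a : R} (ha : a ∉ P) {v : M} (hv : ¬ IsBasicAt P v) : IsBasicAt P (v + a • w) := by
  obtain ⟨c, hc, hcv⟩ : ∃ c ∉ P, c • v ∈ P • (⊤ : Submodule R M) := by
    simpa [IsBasicAt] using hv
  intro b hb hmem
  refine hw (c * b * a) (fun h => ?_) ?_
  · rcases hP.mem_or_mem h with h | h
    · exact (hP.mem_or_mem h).elim hc hb
    · exact ha h
  · convert sub_mem (smul_mem _ c hmem) (smul_mem _ b hcv) using 1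
    module

theorem exists_isBasicAt [Module.Finite R M] {p : PrimeSpectrum R}
    (hp : p ∈ Module.support R M) : ∃ v : M, IsBasicAt p.asIdeal v := by
  have hp' : p ∈ Module.support R (M ⧸ p.asIdeal • (⊤ : Submodule R M)) := by
    rw [Module.support_quotient]
    exact ⟨hp, (PrimeSpectrum.mem_zeroLocus _ _).mpr le_rfl⟩
  obtain ⟨m, hm⟩ := Module.mem_support_iff'.mp hp'
  obtain ⟨v, rfl⟩ := mkQ_surjective _ m
  exact ⟨v, fun a ha hav => hm a ha (by rwa [← map_smul, mkQ_apply, Quotient.mk_eq_zero])⟩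

theorem exists_isBasicAt_forall [Module.Finite R M] (F : Finset (PrimeSpectrum R))
    (hF : ↑F ⊆ Module.support R M) : ∃ v : M, ∀ p ∈ F, IsBasicAt p.asIdeal v := by
  classical
  induction F using Finset.strongInduction with
  | H F ih =>
  rcases F.eq_empty_or_nonempty with rfl | hne
  · exact ⟨0, by simp⟩
  obtain ⟨p₀, hp₀⟩ := F.exists_minimal hne
  obtain ⟨v, hv⟩ := ih (F.erase p₀) (Finset.erase_ssubset hp₀.prop)
    ((Finset.coe_subset.mpr (F.erase_subset p₀)).trans hF)
  obtain ⟨w, hw⟩ := exists_isBasicAt (hF hp₀.prop)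
  obtain ⟨a, ha, hap₀⟩ : ∃ a ∈ (F.erase p₀).inf PrimeSpectrum.asIdeal, a ∉ p₀.asIdeal := by
    refine SetLike.not_le_iff_exists.mp fun hle => ?_
    obtain ⟨q, hq, hqp₀⟩ := (p₀.isPrime.inf_le').mp hle
    exact (Finset.mem_erase.mp hq).1 (hp₀.eq_of_le (Finset.mem_of_mem_erase hq) hqp₀)
  by_cases hvp₀ : IsBasicAt p₀.asIdeal v
  · refine ⟨v, fun p hp => ?_⟩
    rcases eq_or_ne p p₀ with rfl | hpp₀
    exacts [hvp₀, hv p (Finset.mem_erase.mpr ⟨hpp₀, hp⟩)]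
  · refine ⟨v + a • w, fun p hp => ?_⟩
    rcases eq_or_ne p p₀ with rfl | hpp₀
    · exact hw.add_smul_of_not_isBasicAt p.isPrime hap₀ hvp₀
    · have hpF : p ∈ F.erase p₀ := Finset.mem_erase.mpr ⟨hpp₀, hp⟩
      exact (hv p hpF).add_smul_of_mem (Finset.inf_le (f := PrimeSpectrum.asIdeal) hpF ha) w

end LocalGeneration

section ResidueField

variable {R : Type*} [CommRing R] (I : Ideal R) {M : Type*} [AddCommGroup M] [Module R M]

attribute [local instance] Ideal.Quotient.field

theorem finrank_quotient_smul_top_le_mu [I.IsMaximal] [Module.Finite R M] :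
    Module.finrank (R ⧸ I) (M ⧸ I • (⊤ : Submodule R M)) ≤ mu R M := by
  classical
  obtain ⟨s, hcard, hspan⟩ := exists_finset_card_eq_mu R M
  set t : Finset (M ⧸ I • (⊤ : Submodule R M)) := s.image (I • ⊤ : Submodule R M).mkQ
  have ht : span (R ⧸ I) (t : Set (M ⧸ I • (⊤ : Submodule R M))) = ⊤ := by
    rw [← restrictScalars_eq_top_iff R, restrictScalars_span R (R ⧸ I)
      Ideal.Quotient.mk_surjective, Finset.coe_image, ← map_span, hspan, Submodule.map_top,
      range_mkQ]
  calc Module.finrank (R ⧸ I) (M ⧸ I • (⊤ : Submodule R M))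
      = (t : Set (M ⧸ I • (⊤ : Submodule R M))).finrank (R ⧸ I) := by
        rw [Set.finrank, ht, finrank_top]
    _ ≤ t.card := finrank_span_finset_le_card t
    _ ≤ mu R M := hcard ▸ Finset.card_image_le

variable (M) in
theorem finrank_quotient_smul_top_eq_finrank_tensor :
    Module.finrank (R ⧸ I) (M ⧸ I • (⊤ : Submodule R M)) =
      Module.finrank (R ⧸ I) ((R ⧸ I) ⊗[R] M) :=
  ((quotTensorEquivQuotSMul M I).extendScalarsOfSurjective
    Ideal.Quotient.mk_surjective).finrank_eq.symm

theorem finrank_quotient_smul_top_pi [I.IsMaximal] {ι : Type*} [Fintype ι] (N : ι → Type*)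
    [∀ i, AddCommGroup (N i)] [∀ i, Module R (N i)] [∀ i, Module.Finite R (N i)] :
    Module.finrank (R ⧸ I) ((∀ i, N i) ⧸ I • (⊤ : Submodule R (∀ i, N i))) =
      ∑ i, Module.finrank (R ⧸ I) (N i ⧸ I • (⊤ : Submodule R (N i))) := by
  classical
  simp only [finrank_quotient_smul_top_eq_finrank_tensor,
    (piRight R (R ⧸ I) (R ⧸ I) N).finrank_eq, Module.finrank_pi_fintype]

theorem locallyGeneratedBy_finrank [I.IsMaximal] [Module.Finite R M] :
    LocallyGeneratedBy R M I (Module.finrank (R ⧸ I) (M ⧸ I • (⊤ : Submodule R M))) := by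
  classical
  let b := Module.finBasis (R ⧸ I) (M ⧸ I • (⊤ : Submodule R M))
  choose x hx using fun i => mkQ_surjective (I • ⊤ : Submodule R M) (b i)
  set s := Finset.univ.image x
  have hs : map (I • ⊤ : Submodule R M).mkQ (span R (s : Set M)) = ⊤ := by
    rw [map_span, Finset.coe_image, Finset.coe_univ, Set.image_univ, ← Set.range_comp,
      show (I • ⊤ : Submodule R M).mkQ ∘ x = b from funext hx,
      ← restrictScalars_span R (R ⧸ I) Ideal.Quotient.mk_surjective, b.span_eq,
      restrictScalars_top]
  obtain ⟨r, hr, hrs⟩ := exists_sub_one_mem_and_smul_le_of_fg_of_le_sup (I := I)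
    (N := span R (s : Set M)) Module.Finite.fg_top le_rfl
    (by rw [sup_comm, ← comap_map_mkQ, hs, comap_top])
  refine ⟨s, r, fun hrI => ?_, Finset.card_image_le.trans (by simp),
    fun y => hrs (smul_mem_pointwise_smul y r ⊤ mem_top)⟩
  exact (Ideal.ne_top_iff_one I).mp ‹I.IsMaximal›.ne_top (by simpa using sub_mem hrI hr)

end ResidueField

section Forster

variable {R : Type*} [CommRing R] {M : Type*} [AddCommGroup M] [Module R M]

variable (R M) in
/-- Its zero locus is the set of primes at which `M` needs more than `k` local generators. -/
noncomputable def generationIdeal (k : ℕ) : Ideal R :=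
  ⨆ s : {s : Finset M // s.card ≤ k}, Module.annihilator R (M ⧸ span R (s.1 : Set M))

theorem generationIdeal_le_iff {P : Ideal R} {k : ℕ} :
    generationIdeal R M k ≤ P ↔ ¬ LocallyGeneratedBy R M P k := by
  have hmem (s : Finset M) (a : R) :
      a ∈ Module.annihilator R (M ⧸ span R (s : Set M)) ↔ ∀ x : M, a • x ∈ span R (s : Set M) := by
    simp [annihilator_quotient, mem_colon]
  simp only [generationIdeal, iSup_le_iff]
  constructor
  · rintro h ⟨s, a, ha, hs, hsa⟩
    exact ha (h ⟨s, hs⟩ ((hmem s a).mpr hsa))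
  · rintro h ⟨s, hs⟩ a ha
    by_contra haP
    exact h ⟨s, a, haP, hs, (hmem s a).mp ha⟩

theorem finite_setOf_localMu_jump [IsNoetherianRing R] [Module.Finite R M] :
    {p ∈ Module.support R M | ∀ q < p, localMu R M q.asIdeal < localMu R M p.asIdeal}.Finite := by
  refine (Set.finite_iUnion fun k : Fin (mu R M + 1) =>
    (Ideal.finite_minimalPrimes_of_isNoetherianRing R (generationIdeal R M k)).preimage
      fun _ _ _ _ => PrimeSpectrum.ext).subset ?_
  rintro p ⟨hp, hjump⟩
  have hpos : 0 < localMu R M p.asIdeal :=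
    Nat.pos_of_ne_zero fun h => (localMu_eq_zero_iff p).mp h hp
  set k := localMu R M p.asIdeal - 1
  have hk (q : PrimeSpectrum R) :
      generationIdeal R M k ≤ q.asIdeal ↔ localMu R M p.asIdeal ≤ localMu R M q.asIdeal := by
    rw [generationIdeal_le_iff]
    constructor
    · intro h
      by_contra! hlt
      exact h ((locallyGeneratedBy_localMu q.isPrime.ne_top).mono (by omega))
    · intro h hgen
      have := localMu_le hgen
      omega
  refine Set.mem_iUnion.mpr ⟨⟨k, by have := localMu_le_mu (M := M) p.isPrime.ne_top; omega⟩, ?_⟩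
  refine ⟨⟨p.isPrime, (hk p).mpr le_rfl⟩, fun Q ⟨hQ, hkQ⟩ hQp => ?_⟩
  by_contra hpQ
  have := hjump ⟨Q, hQ⟩ (lt_of_le_not_ge hQp hpQ)
  have := (hk ⟨Q, hQ⟩).mp hkQ
  omega

theorem finite_setOf_lt_localMu_add_coheight [IsNoetherianRing R] [Module.Finite R M] {b : ℕ}
    (h : ∀ p ∈ Module.support R M, (localMu R M p.asIdeal : ℕ∞) + Order.coheight p ≤ b + 1) :
    {p ∈ Module.support R M | (b : ℕ∞) < localMu R M p.asIdeal + Order.coheight p}.Finite := by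
  -- Below such a prime the coheight grows, so `localMu` has to drop there.
  refine finite_setOf_localMu_jump.subset fun p ⟨hp, hbp⟩ => ⟨hp, fun q hqp => ?_⟩
  by_contra! hle
  have hq : q ∈ Module.support R M := by
    by_contra hq
    have hq0 := (localMu_eq_zero_iff q).mpr hq
    exact (localMu_eq_zero_iff p).mp (by omega) hp
  have hcoh := Order.coheight_add_one_le hqp
  have hbq := h q hq
  lift Order.coheight q to ℕ using ne_top_of_le_ne_top (by simp) (le_add_self.trans hbq) with cq
  lift Order.coheight p to ℕ using ne_top_of_le_ne_top (by simp) (le_self_add.trans hcoh) with cp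
  norm_cast at hbp hcoh hbq
  omega

theorem mu_le_of_localMu_add_coheight_le [IsNoetherianRing R] (b : ℕ) (M : Type*)
    [AddCommGroup M] [Module R M] [Module.Finite R M]
    (h : ∀ p ∈ Module.support R M, (localMu R M p.asIdeal : ℕ∞) + Order.coheight p ≤ b) :
    mu R M ≤ b := by
  induction b generalizing M with
  | zero =>
    suffices Subsingleton M from (mu_eq_zero_of_subsingleton (R := R)).le
    refine (Module.support_eq_empty_iff (R := R)).mp
      (Set.eq_empty_of_forall_notMem fun p hp => ?_)
    have hp0 : localMu R M p.asIdeal = 0 ∧ Order.coheight p = 0 := by simpa using h p hp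
    exact (localMu_eq_zero_iff p).mp hp0.1 hp
  | succ b ih =>
    set F := {p ∈ Module.support R M | (b : ℕ∞) < localMu R M p.asIdeal + Order.coheight p}
    have hF : F.Finite := finite_setOf_lt_localMu_add_coheight h
    obtain ⟨v, hv⟩ := exists_isBasicAt_forall (M := M) hF.toFinset
      (by rw [hF.coe_toFinset]; exact fun p hp => hp.1)
    have hquot : mu R (M ⧸ R ∙ v) ≤ b := ih _ fun p hp => by
      have hpM : p ∈ Module.support R M :=
        Module.support_subset_of_surjective _ (mkQ_surjective _) hp
      by_cases hpF : p ∈ F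
      · have hdrop := localMu_quotient_span_singleton_le p.isPrime (hv p (hF.mem_toFinset.mpr hpF))
        have hpos : localMu R M p.asIdeal ≠ 0 := fun h0 => (localMu_eq_zero_iff p).mp h0 hpM
        have hbp := h p hpM
        lift Order.coheight p to ℕ using ne_top_of_le_ne_top (by simp) (le_add_self.trans hbp)
          with cp
        norm_cast at hbp ⊢
        omega
      · have hbp : (localMu R M p.asIdeal : ℕ∞) + Order.coheight p ≤ b :=
          not_lt.mp fun hlt => hpF ⟨hpM, hlt⟩
        refine le_trans (add_le_add_left ?_ _) hbp
        exact_mod_cast localMu_quotient_le p.isPrime.ne_top (R ∙ v)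
    calc mu R M ≤ mu R (M ⧸ R ∙ v) + ({v} : Finset M).card :=
          mu_le_mu_quotient_add_card (by simp)
      _ ≤ b + 1 := by simpa using hquot

end Forster

theorem exists_isMaximal_mu_le_finrank_add {R : Type*} [CommRing R] [IsNoetherianRing R]
    [Nontrivial R] {d : ℕ} (hd : ringKrullDim R ≤ d) (M : Type*) [AddCommGroup M] [Module R M]
    [Module.Finite R M] :
    ∃ m : Ideal R, m.IsMaximal ∧
      mu R M ≤ Module.finrank (R ⧸ m) (M ⧸ m • (⊤ : Submodule R M)) + d := by
  set S := {r | ∃ m : Ideal R, m.IsMaximal ∧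
    Module.finrank (R ⧸ m) (M ⧸ m • (⊤ : Submodule R M)) = r}
  have hS : S.Nonempty := let ⟨m, hm⟩ := Ideal.exists_maximal R; ⟨_, m, hm, rfl⟩
  have hSbdd : BddAbove S := ⟨mu R M, fun _ ⟨m, hm, hr⟩ => hr ▸ finrank_quotient_smul_top_le_mu m⟩
  obtain ⟨m, hm, hmS⟩ := Nat.sSup_mem hS hSbdd
  refine ⟨m, hm, hmS ▸ mu_le_of_localMu_add_coheight_le _ M fun p _ => ?_⟩
  obtain ⟨m', hm', hpm'⟩ := Ideal.exists_le_maximal p.asIdeal p.isPrime.ne_top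
  have hloc : localMu R M p.asIdeal ≤ sSup S :=
    calc localMu R M p.asIdeal ≤ localMu R M m' := localMu_mono hpm' hm'.ne_top
      _ ≤ Module.finrank (R ⧸ m') (M ⧸ m' • (⊤ : Submodule R M)) :=
        localMu_le (locallyGeneratedBy_finrank m')
      _ ≤ sSup S := le_csSup hSbdd ⟨m', hm', rfl⟩
  have hcoh : Order.coheight p ≤ d := by
    exact_mod_cast (Order.coheight_le_krullDim p).trans hd
  push_cast
  exact add_le_add (by exact_mod_cast hloc) hcoh

/-- For a Noetherian ring `R` of finite Krull dimension `d` and a finitely generated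
module `M`, one has `n·μ(M) − n·d ≤ μ(M^{⊕n}) ≤ n·μ(M)` for every `n`. -/
theorem mu_pow_bounds {R : Type*} [CommRing R] [IsNoetherianRing R] (d : ℕ)
    (hd : ringKrullDim R = d) (M : Type*) [AddCommGroup M] [Module R M]
    [Module.Finite R M] (n : ℕ) :
    mu R (Fin n → M) ≤ n * mu R M ∧ n * mu R M ≤ mu R (Fin n → M) + n * d := by
  refine ⟨by simpa [mul_comm] using mu_pi_le_sum (R := R) fun _ : Fin n => M, ?_⟩
  rcases subsingleton_or_nontrivial R with _ | _
  · have := Module.subsingleton R M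
    simp [mu_eq_zero_of_subsingleton (R := R) (M := M)]
  obtain ⟨m, hm, hmu⟩ := exists_isMaximal_mu_le_finrank_add hd.le M
  calc n * mu R M ≤ n * Module.finrank (R ⧸ m) (M ⧸ m • (⊤ : Submodule R M)) + n * d := by
        rw [← mul_add]
        exact Nat.mul_le_mul_left n hmu
    _ = Module.finrank (R ⧸ m) ((Fin n → M) ⧸ m • (⊤ : Submodule R (Fin n → M))) + n * d := by
        rw [finrank_quotient_smul_top_pi m, Finset.sum_const, Finset.card_fin, smul_eq_mul]
    _ ≤ mu R (Fin n → M) + n * d := by grw [finrank_quotient_smul_top_le_mu m]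
end
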